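/- There is no pair of non-oblivious, stability-preserving mechanisms (M1, M2) for two-round school choice that is dominant-strategy incentive compatible with respect to participation timing: on the 4-student, 3-school instance with student preferences (1,2,3),(2,1,3),(2,3,1),(2,3,1) and school preferences (B,A,C,D),(A,C,B,D),(C,B,A,D) with unit capacities, for every choice of stable matching by M1 on the participant set {A,B,D}, some student strictly gains by skipping round R1 (possibly jointly with another skipper). -/
import Mathlib


/- Concrete two-round school-choice instance: students A,B,C,D = 0,1,2,3,
schools 1,2,3 = 0,1,2, unit capacities in round R1.
Student preferences: A:(1,2,3), B:(2,1,3), C:(2,3,1), D:(2,3,1).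
School preferences: 1:(B,A,C,D), 2:(A,C,B,D), 3:(C,B,A,D).
Lower value = more preferred; being unmatched (rank 3 resp. 4) is worst,
so every student-school pair is mutually acceptable. -/

abbrev Stu := Fin 4
abbrev Sch := Fin 3

def sVal : Stu → Option Sch → ℕ := fun s o =>
  match o with
  | none => 3
  | some h => ![![0, 1, 2], ![1, 0, 2], ![2, 0, 1], ![2, 0, 1]] s h

def hVal : Sch → Stu → ℕ := fun h s =>
  ![![1, 0, 2, 3], ![0, 2, 1, 3], ![2, 1, 0, 3]] h s

/-- `M` matches only students of `P`. -/
def matchesOnly (P : Finset Stu) (M : Stu → Option Sch) : Prop :=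
  ∀ s ∉ P, M s = none

/-- No blocking pair among the present students `P`: no `s ∈ P` and school `h`
with `s` preferring `h` to `M s` while `h` either prefers `s` to one of its
assigned students (type 1) or has an empty seat (type 2; all pairs are
mutually acceptable here). -/
def noBlock (P : Finset Stu) (M : Stu → Option Sch) : Prop :=
  ¬ ∃ s ∈ P, ∃ h : Sch, sVal s (some h) < sVal s (M s) ∧
    ((∃ s', M s' = some h ∧ hVal h s < hVal h s') ∨ (∀ s', M s' ≠ some h))

/-- A valid round-R1 outcome on participants `P`: a stable matching of `P`
respecting the unit capacities. -/
def r1Valid (P : Finset Stu) (M : Stu → Option Sch) : Prop :=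
  matchesOnly P M ∧
  (∀ h : Sch, (Finset.univ.filter (fun s => M s = some h)).card ≤ 1) ∧
  noBlock P M

/-- A valid round-R2 outcome on present students `P`, extending the round-R1
matching `M0` without breaking any match, stable with capacities expanded as
needed (so a school blocks as under-filled only when it is empty). -/
def r2Valid (P : Finset Stu) (M0 M : Stu → Option Sch) : Prop :=
  matchesOnly P M ∧ (∀ s h, M0 s = some h → M s = some h) ∧ noBlock P M

instance (P : Finset Stu) (M : Stu → Option Sch) : Decidable (r1Valid P M) := by
  unfold r1Valid matchesOnly noBlock; infer_instance

set_option maxRecDepth 10000 in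
lemma L1 : ∀ N : Stu → Option Sch, r1Valid Finset.univ N → N 2 = some 2 := by decide

set_option maxRecDepth 10000 in
lemma L2 : ∀ M : Stu → Option Sch, r1Valid {0,1,3} M → M 1 = some 0 ∨ M 1 = some 1 := by
  decide

set_option maxRecDepth 10000 in
lemma L3 : ∀ K : Stu → Option Sch, r1Valid {0,3} K → K 3 = some 1 := by decide

lemma svB : ∀ o : Option Sch, o ≠ some 1 → sVal 1 (some 1) < sVal 1 o := by decide

lemma svC : ∀ o : Option Sch, o ≠ some 1 → sVal 2 (some 1) < sVal 2 o := by decide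

/-- Impossibility of non-oblivious, stability-preserving, DSIC (w.r.t.
participation timing) mechanisms: on this instance with City `{A,B,C,D}`,
there is no pair `(M1, M2)` — `M1` producing a stable round-R1 matching of any
participant set and `M2` extending it to a stable matching once the remaining
residents arrive in round R2 — under which no student can ever strictly gain
by skipping round R1, regardless of which other students also skip. -/
theorem no_nonoblivious_DSIC :
    ¬ ∃ (M1 : Finset Stu → Stu → Option Sch)
        (M2 : (Stu → Option Sch) → Finset Stu → Stu → Option Sch),
      (∀ P, r1Valid P (M1 P)) ∧
      (∀ P A, r2Valid (P ∪ A) (M1 P) (M2 (M1 P) A)) ∧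
      (∀ (P : Finset Stu) (x : Stu), x ∉ P →
        sVal x (M2 (M1 (insert x P)) (Finset.univ \ insert x P) x) ≤
          sVal x (M2 (M1 P) (Finset.univ \ P) x)) := by
  
  rintro ⟨M1, M2, h1, h2, h3⟩
  have hins2 : (insert (2:Stu) {0,1,3} : Finset Stu) = Finset.univ := by decide
  have hins1 : (insert (1:Stu) {0,3} : Finset Stu) = ({0,1,3} : Finset Stu) := by decide
  rcases L2 _ (h1 {0,1,3}) with hB | hB
  · -- B is matched to school 0 by M1 {A,B,D}; B gains by skipping round 1.
    have hKA : M1 {0,3} 3 = some 1 := L3 _ (h1 {0,3})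
    have key := h3 {0,3} 1 (by decide)
    rw [hins1] at key
    obtain ⟨-, hext, hnb⟩ := h2 {0,3} (Finset.univ \ {0,3})
    have hD : M2 (M1 {0,3}) (Finset.univ \ {0,3}) 3 = some 1 := hext _ _ hKA
    have hB1 : M2 (M1 {0,3}) (Finset.univ \ {0,3}) 1 = some 1 := by
      by_contra hne
      exact hnb ⟨1, by decide, 1, svB _ hne, Or.inl ⟨3, hD, by decide⟩⟩
    obtain ⟨-, hext2, -⟩ := h2 {0,1,3} (Finset.univ \ {0,1,3})
    have hN1 : M2 (M1 {0,1,3}) (Finset.univ \ {0,1,3}) 1 = some 0 := hext2 _ _ hB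
    rw [hN1, hB1] at key
    exact absurd key (by decide)
  · -- B is matched to school 1 by M1 {A,B,D}; C gains by skipping round 1.
    have hNC : M1 Finset.univ 2 = some 2 := L1 _ (h1 _)
    have key := h3 {0,1,3} 2 (by decide)
    rw [hins2] at key
    obtain ⟨-, hext, hnb⟩ := h2 {0,1,3} (Finset.univ \ {0,1,3})
    have hB1 : M2 (M1 {0,1,3}) (Finset.univ \ {0,1,3}) 1 = some 1 := hext _ _ hB
    have hC : M2 (M1 {0,1,3}) (Finset.univ \ {0,1,3}) 2 = some 1 := by
      by_contra hne
      exact hnb ⟨2, by decide, 1, svC _ hne, Or.inl ⟨1, hB1, by decide⟩⟩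
    obtain ⟨-, hext0, -⟩ := h2 Finset.univ (Finset.univ \ Finset.univ)
    have hN2 : M2 (M1 Finset.univ) (Finset.univ \ Finset.univ) 2 = some 2 := hext0 _ _ hNC
    rw [hN2, hC] at key
    exact absurd key (by decide)
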